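/- A σ1-positive braid is never trivial: in B∞, for every n ≥ 1 and all braids c0, c1, …, cn, the element sh(c0)·σ1·sh(c1)·σ1 ⋯ σ1·sh(cn) is not equal to 1. Consequently, the braid shelf (B∞, ◃) with a ◃ b := a · sh(b) · σ1 · sh(a)⁻¹ is acyclic: the transitive closure of the division relation a ⊏ b ⇔ (∃x, a ◃ x = b) is irreflexive. -/

import Mathlib

/-!
Use the Artin representation `ψ : B∞ → Aut (F(x₀, x₁, …))`, where `σ_{i+1}` sends
`xᵢ ↦ xᵢ xᵢ₊₁ xᵢ⁻¹`, `xᵢ₊₁ ↦ xᵢ` and fixes the other generators. Every `ψ (sh c)` fixes `x₀` and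
preserves the subgroup `H` generated by `x₁, x₂, …`, so it preserves the set of elements
`x₀ w x₀⁻¹` in which the normal form of `w` in `⟨x₀⟩ ∗ H` is nonempty and begins and ends in `H`.
So does `ψ σ₁`, which turns `x₀ w x₀⁻¹` into `x₀ (x₁ w' x₁⁻¹) x₀⁻¹`, where `w'` has the analogous
form for `x₁`; reading the reduced word of `x₁ w' x₁⁻¹` shows that it has the required form
for `x₀`. Since `ψ (σ₁ sh c) x₀ = x₀ x₁ x₀⁻¹` lies in that set and `x₀` does not, no σ₁-positive
braid acts trivially. For the shelf, `a ⊏⁺ b` makes `a⁻¹ b sh(a)` σ₁-positive, and `sh(a)` is not.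
-/

/-- The braid relations on the generators `σ₁, σ₂, …` (generator `i : ℕ` stands
for `σ_{i+1}`). -/
def braidRels : Set (FreeGroup ℕ) :=
  {r | ∃ i j : ℕ,
    (i + 2 ≤ j ∧
      r = FreeGroup.of i * FreeGroup.of j * (FreeGroup.of i)⁻¹ * (FreeGroup.of j)⁻¹) ∨
    (j = i + 1 ∧
      r = FreeGroup.of i * FreeGroup.of j * FreeGroup.of i *
        (FreeGroup.of j)⁻¹ * (FreeGroup.of i)⁻¹ * (FreeGroup.of j)⁻¹)}

/-- The braid group `B∞` on infinitely many strands, as a presented group. -/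
abbrev BInf : Type := PresentedGroup braidRels

/-- The generator `σ_{i+1}` of `B∞`; in particular `σ 0` is `σ₁`. -/
def σ (i : ℕ) : BInf := PresentedGroup.of i

/-- The braid shelf operation `a ◃ b := a * sh b * σ₁ * (sh a)⁻¹`. -/
def braidAct (sh : BInf →* BInf) (a b : BInf) : BInf :=
  a * sh b * σ 0 * (sh a)⁻¹

/-- `posProd sh c n = sh (c 0) * σ₁ * sh (c 1) * σ₁ * ⋯ * σ₁ * sh (c n)`,
the generic σ₁-positive braid with `n` occurrences of `σ₁`. -/
def posProd (sh : BInf →* BInf) (c : ℕ → BInf) : ℕ → BInf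
  | 0 => sh (c 0)
  | n + 1 => posProd sh c n * σ 0 * sh (c (n + 1))

theorem List.exists_append_forall_not_head? {β : Type*} (P : β → Prop) [DecidablePred P]
    (L : List β) : ∃ A M, L = A ++ M ∧ (∀ p ∈ A, P p) ∧ ∀ q ∈ M.head?, ¬ P q := by
  refine ⟨L.takeWhile (P ·), L.dropWhile (P ·), List.takeWhile_append_dropWhile.symm,
    fun p hp => by simpa using List.mem_takeWhile_imp hp, fun q hq => ?_⟩
  have := List.head?_dropWhile_not (P ·) L
  rw [Option.mem_def] at hq
  simpa [hq] using this

namespace FreeGroup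

variable {α β : Type*}

theorem mk_mem_closure_image_of {s : Set α} :
    ∀ {L : List (α × Bool)}, (∀ p ∈ L, p.1 ∈ s) → mk L ∈ Subgroup.closure (of '' s)
  | [], _ => one_mem _
  | (a, b) :: L, h => by
    have ha : of a ∈ Subgroup.closure (of '' s) :=
      Subgroup.subset_closure ⟨a, h _ List.mem_cons_self, rfl⟩
    have hL := mk_mem_closure_image_of fun p hp => h p (List.mem_cons_of_mem _ hp)
    rw [← List.singleton_append, ← mul_mk]
    cases b
    · exact mul_mem (inv_mem ha) hL
    · exact mul_mem ha hL

def avoiding (d : α) : Subgroup (FreeGroup α) := Subgroup.closure (of '' {d}ᶜ)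

theorem of_mem_avoiding {d i : α} (h : i ≠ d) : of i ∈ avoiding d :=
  Subgroup.subset_closure ⟨i, h, rfl⟩

theorem mulAut_ext {φ ψ : MulAut (FreeGroup α)} (h : ∀ a, φ (of a) = ψ (of a)) : φ = ψ :=
  MulEquiv.toMonoidHom_injective (ext_hom _ _ h)

theorem map_mem_avoiding {d : α} {d' : β} {f : FreeGroup α →* FreeGroup β}
    (hf : ∀ i ≠ d, f (of i) ∈ avoiding d') {g : FreeGroup α} (hg : g ∈ avoiding d) :
    f g ∈ avoiding d' :=
  (Subgroup.closure_le ((avoiding d').comap f)).2 (by rintro _ ⟨i, hi, rfl⟩; exact hf i hi) hg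

def IsCapped (d : α) (L : List (α × Bool)) : Prop :=
  L ≠ [] ∧ (∀ p ∈ L.head?, p.1 ≠ d) ∧ ∀ p ∈ L.getLast?, p.1 ≠ d

/-- The elements whose normal form in the free product `⟨of d⟩ ∗ avoiding d` begins and ends
with a syllable from `avoiding d`. -/
inductive Alternating (d : α) : FreeGroup α → Prop
  | syllable {s : FreeGroup α} : s ∈ avoiding d → s ≠ 1 → Alternating d s
  | cons {s g : FreeGroup α} {n : ℤ} : s ∈ avoiding d → s ≠ 1 → n ≠ 0 → Alternating d g →
      Alternating d (s * of d ^ n * g)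

theorem Alternating.map {d : α} {d' : β} {f : FreeGroup α →* FreeGroup β}
    (hf : Function.Injective f) (hd : f (of d) = of d') (hH : ∀ i ≠ d, f (of i) ∈ avoiding d')
    {g : FreeGroup α} (hg : Alternating d g) : Alternating d' (f g) := by
  induction hg with
  | syllable hs h1 => exact .syllable (map_mem_avoiding hH hs) ((map_ne_one_iff f hf).2 h1)
  | cons hs h1 hn _ ih =>
    rw [_root_.map_mul, _root_.map_mul, map_zpow, hd]
    exact .cons (map_mem_avoiding hH hs) ((map_ne_one_iff f hf).2 h1) hn ih

def IsConjAlternating (d : α) (g : FreeGroup α) : Prop :=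
  ∃ w, Alternating d w ∧ g = of d * w * (of d)⁻¹

open Pointwise in
def letterStabilizer (d : α) : Subgroup (MulAut (FreeGroup α)) :=
  MulAction.stabilizer _ (of d) ⊓ MulAction.stabilizer _ (avoiding d : Set (FreeGroup α))

theorem apply_of_of_mem_letterStabilizer {d : α} {φ : MulAut (FreeGroup α)}
    (hφ : φ ∈ letterStabilizer d) : φ (of d) = of d :=
  MulAction.mem_stabilizer_iff.1 (Subgroup.mem_inf.1 hφ).1

theorem IsConjAlternating.map_of_mem_letterStabilizer {d : α} {φ : MulAut (FreeGroup α)}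
    (hφ : φ ∈ letterStabilizer d) {g : FreeGroup α} (hg : IsConjAlternating d g) :
    IsConjAlternating d (φ g) := by
  have hfix := apply_of_of_mem_letterStabilizer hφ
  have hH := (Subgroup.mem_inf.1 hφ).2
  obtain ⟨w, hw, rfl⟩ := hg
  refine ⟨φ w, hw.map (f := φ.toMonoidHom) φ.injective hfix fun i hi => ?_, by simp [hfix]⟩
  exact (MulAction.mem_stabilizer_set.1 hH (of i)).2 (of_mem_avoiding hi)

variable [DecidableEq α]

theorem toWord_mul_of_ne {x y : FreeGroup α}
    (h : ∀ a ∈ x.toWord.getLast?, ∀ b ∈ y.toWord.head?, a.1 ≠ b.1) :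
    (x * y).toWord = x.toWord ++ y.toWord := by
  rw [toWord_mul]
  exact IsReduced.reduce_eq <| isReduced_toWord.append isReduced_toWord
    fun a ha b hb hab => absurd hab (h a ha b hb)

theorem mem_closure_image_of_iff {s : Set α} {g : FreeGroup α} :
    g ∈ Subgroup.closure (of '' s) ↔ ∀ p ∈ g.toWord, p.1 ∈ s := by
  refine ⟨fun hg => ?_, fun h => mk_toWord (x := g) ▸ mk_mem_closure_image_of h⟩
  induction hg using Subgroup.closure_induction with
  | mem g hg =>
    obtain ⟨a, ha, rfl⟩ := hg
    simpa [toWord_of] using ha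
  | one => simp
  | mul x y _ _ hx hy =>
    intro p hp
    exact (List.mem_append.1 ((toWord_mul_sublist x y).mem hp)).elim (hx p) (hy p)
  | inv x _ hx =>
    intro p hp
    obtain ⟨q, hq, rfl⟩ := List.mem_map.1 (List.mem_reverse.1 (toWord_inv x ▸ hp))
    exact hx q hq

theorem mem_avoiding_iff {d : α} {g : FreeGroup α} :
    g ∈ avoiding d ↔ ∀ p ∈ g.toWord, p.1 ≠ d :=
  mem_closure_image_of_iff

theorem eq_of_mem_toWord_zpow {d : α} {n : ℤ} {p : α × Bool} (hp : p ∈ (of d ^ n).toWord) :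
    p.1 = d := by
  have : of d ^ n ∈ Subgroup.closure (of '' {d}) := by
    rw [Set.image_singleton, ← Subgroup.zpowers_eq_closure]
    exact Subgroup.zpow_mem_zpowers _ _
  exact mem_closure_image_of_iff.1 this p hp

variable {d : α}

theorem isCapped_toWord_of_mem_avoiding {s : FreeGroup α} (hs : s ∈ avoiding d) (h1 : s ≠ 1) :
    IsCapped d s.toWord := by
  have hd := mem_avoiding_iff.1 hs
  exact ⟨by simpa using h1, fun p hp => hd p (List.mem_of_mem_head? hp),
    fun p hp => hd p (List.mem_of_mem_getLast? hp)⟩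

theorem Alternating.isCapped_toWord {g : FreeGroup α} (hg : Alternating d g) :
    IsCapped d g.toWord := by
  induction hg with
  | syllable hs h1 => exact isCapped_toWord_of_mem_avoiding hs h1
  | @cons s g n hs h1 hn _ ih =>
    obtain ⟨hsne, hshead, hslast⟩ := isCapped_toWord_of_mem_avoiding hs h1
    obtain ⟨hgne, hghead, hglast⟩ := ih
    have hpow : (of d ^ n).toWord ≠ [] := by simpa using hn
    have h₁ : (s * of d ^ n).toWord = s.toWord ++ (of d ^ n).toWord :=
      toWord_mul_of_ne fun a ha b hb => (eq_of_mem_toWord_zpow (List.mem_of_mem_head? hb)) ▸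
        hslast a ha
    have h₂ : (s * of d ^ n * g).toWord = s.toWord ++ (of d ^ n).toWord ++ g.toWord := by
      rw [← h₁]
      refine toWord_mul_of_ne fun a ha b hb => ?_
      rw [h₁, List.getLast?_append_of_ne_nil _ hpow] at ha
      exact (eq_of_mem_toWord_zpow (List.mem_of_mem_getLast? ha)) ▸ (hghead b hb).symm
    refine ⟨by simp [h₂, hsne], fun p hp => hshead p ?_, fun p hp => hglast p ?_⟩
    · rwa [h₂, List.append_assoc, List.head?_append_of_ne_nil _ hsne] at hp
    · rwa [h₂, List.getLast?_append_of_ne_nil _ hgne] at hp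

theorem IsCapped.split {L : List (α × Bool)} (hL : IsCapped d L) :
    (∀ p ∈ L, p.1 ≠ d) ∨ ∃ A R B, L = A ++ R ++ B ∧ A ≠ [] ∧ (∀ p ∈ A, p.1 ≠ d) ∧
      R ≠ [] ∧ (∀ p ∈ R, p.1 = d) ∧ IsCapped d B := by
  obtain ⟨hne, hhead, hlast⟩ := hL
  obtain ⟨A, M, rfl, hA, hM⟩ := L.exists_append_forall_not_head? (·.1 ≠ d)
  obtain ⟨R, B, rfl, hR, hB⟩ := M.exists_append_forall_not_head? (·.1 = d)
  rcases eq_or_ne (R ++ B) [] with hRB | hRB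
  · exact .inl (by simpa [hRB] using hA)
  right
  obtain ⟨q, hq⟩ := Option.isSome_iff_exists.1 (List.isSome_head?.2 hRB)
  have hqd : q.1 = d := not_not.1 (hM q hq)
  have hRne : R ≠ [] := by
    rintro rfl
    exact hB q hq hqd
  have hAne : A ≠ [] := by
    rintro rfl
    exact hhead q hq hqd
  have hBne : B ≠ [] := by
    rintro rfl
    exact hlast (R.getLast hRne) (by simp [List.getLast?_eq_some_getLast hRne])
      (hR _ (List.getLast_mem hRne))
  refine ⟨A, R, B, List.append_assoc .. |>.symm, hAne, hA, hRne, hR, hBne, hB, fun p hp => ?_⟩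
  exact hlast p (by rwa [List.getLast?_append_of_ne_nil _ (by simp [hBne]),
    List.getLast?_append_of_ne_nil _ hBne])

theorem mk_ne_one_of_isReduced {L : List (α × Bool)} (hL : IsReduced L) (hne : L ≠ []) :
    mk L ≠ 1 := by
  rwa [← toWord_injective.ne_iff, toWord_mk, hL.reduce_eq, toWord_one]

theorem alternating_mk {L : List (α × Bool)} (hred : IsReduced L) (hcap : IsCapped d L) :
    Alternating d (mk L) := by
  induction h : L.length using Nat.strong_induction_on generalizing L with
  | _ n ih =>
  rcases hcap.split with hall | ⟨A, R, B, rfl, hA, hAd, hR, hRd, hB⟩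
  · exact .syllable (mk_mem_closure_image_of hall) (mk_ne_one_of_isReduced hred hcap.1)
  have hRred : IsReduced R := hred.infix ⟨A, B, rfl⟩
  obtain ⟨k, hk⟩ : mk R ∈ Subgroup.zpowers (of d) := by
    rw [Subgroup.zpowers_eq_closure, ← Set.image_singleton]
    exact mk_mem_closure_image_of hRd
  have hk0 : k ≠ 0 := by
    rintro rfl
    exact mk_ne_one_of_isReduced hRred hR (by simpa using hk.symm)
  rw [← mul_mk, ← mul_mk, ← hk]
  refine .cons (mk_mem_closure_image_of hAd) (mk_ne_one_of_isReduced
    (hred.infix ⟨[], R ++ B, by simp⟩) hA) hk0 (ih _ ?_ (hred.infix ⟨A ++ R, [], by simp⟩) hB rfl)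
  have : A.length ≠ 0 := by simpa using hA
  simp only [List.length_append] at h
  omega

theorem alternating_iff {g : FreeGroup α} : Alternating d g ↔ IsCapped d g.toWord :=
  ⟨Alternating.isCapped_toWord, fun h => mk_toWord (x := g) ▸ alternating_mk isReduced_toWord h⟩

theorem not_alternating_of : ¬ Alternating d (of d) := by
  simp [alternating_iff, IsCapped, toWord_of]

theorem Alternating.conj_of {d' : α} {w : FreeGroup α} (hw : Alternating d' w) (hd : d' ≠ d) :
    Alternating d (of d' * w * (of d')⁻¹) := by
  obtain ⟨hne, hhead, hlast⟩ := alternating_iff.1 hw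
  have h₁ : (of d' * w).toWord = (d', true) :: w.toWord :=
    toWord_mul_of_ne fun a ha b hb => by
      simp only [toWord_of, List.getLast?_singleton, Option.mem_some_iff] at ha
      exact ha ▸ (hhead b hb).symm
  have h₂ : (of d' * w * (of d')⁻¹).toWord = (d', true) :: w.toWord ++ [(d', false)] := by
    rw [← h₁]
    refine toWord_mul_of_ne fun a ha b hb => ?_
    rw [h₁, List.getLast?_cons, List.getLast?_eq_some_getLast hne] at ha
    simp only [toWord_inv, toWord_of, invRev, List.map_cons, List.map_nil, List.reverse_singleton,
      List.head?_cons, Option.mem_some_iff] at hb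
    exact hb ▸ hlast a (by simpa [List.getLast?_eq_some_getLast hne] using ha)
  rw [alternating_iff, h₂]
  refine ⟨by simp, by simpa using hd, fun p hp => ?_⟩
  rw [List.getLast?_concat, Option.mem_some_iff] at hp
  exact hp ▸ hd

theorem IsConjAlternating.ne_of {d : α} {g : FreeGroup α} (hg : IsConjAlternating d g) :
    g ≠ of d := by
  obtain ⟨w, hw, rfl⟩ := hg
  intro h
  rw [mul_inv_eq_iff_eq_mul, mul_right_inj] at h
  exact not_alternating_of (h ▸ hw)

end FreeGroup

open FreeGroup (of lift avoiding of_mem_avoiding map_mem_avoiding letterStabilizer Alternating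
  IsConjAlternating apply_of_of_mem_letterStabilizer)

def artinFun (i k : ℕ) : FreeGroup ℕ :=
  if k = i then of i * of (i + 1) * (of i)⁻¹ else if k = i + 1 then of i else of k

def artinInvFun (i k : ℕ) : FreeGroup ℕ :=
  if k = i then of (i + 1) else if k = i + 1 then (of (i + 1))⁻¹ * of i * of (i + 1) else of k

def artin (i : ℕ) : MulAut (FreeGroup ℕ) :=
  MonoidHom.toMulEquiv (lift (artinFun i)) (lift (artinInvFun i))
    (FreeGroup.ext_hom _ _ fun k => by
      by_cases h₁ : k = i
      · subst h₁; simp [artinFun, artinInvFun]; group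
      by_cases h₂ : k = i + 1
      · subst h₂; simp [artinFun, artinInvFun]
      · simp [artinFun, artinInvFun, h₁, h₂])
    (FreeGroup.ext_hom _ _ fun k => by
      by_cases h₁ : k = i
      · subst h₁; simp [artinFun, artinInvFun]
      by_cases h₂ : k = i + 1
      · subst h₂; simp [artinFun, artinInvFun]; group
      · simp [artinFun, artinInvFun, h₁, h₂])

section

variable {i k : ℕ}

@[simp]
theorem artin_of_self : artin i (of i) = of i * of (i + 1) * (of i)⁻¹ := by
  simp [artin, artinFun]

@[simp]
theorem artin_of_succ : artin i (of (i + 1)) = of i := by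
  simp [artin, artinFun]

theorem artin_of_of_ne (h₁ : k ≠ i) (h₂ : k ≠ i + 1) : artin i (of k) = of k := by
  simp [artin, artinFun, h₁, h₂]

@[simp]
theorem artin_symm_of_self : (artin i).symm (of i) = of (i + 1) := by
  simp [artin, artinInvFun]

@[simp]
theorem artin_symm_of_succ :
    (artin i).symm (of (i + 1)) = (of (i + 1))⁻¹ * of i * of (i + 1) := by
  simp [artin, artinInvFun]

theorem artin_symm_of_of_ne (h₁ : k ≠ i) (h₂ : k ≠ i + 1) : (artin i).symm (of k) = of k := by
  simp [artin, artinInvFun, h₁, h₂]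

theorem artin_mul_comm {j : ℕ} (hij : i + 2 ≤ j) : artin i * artin j = artin j * artin i := by
  refine FreeGroup.mulAut_ext fun k => ?_
  obtain rfl | rfl | rfl | rfl | hk : k = i ∨ k = i + 1 ∨ k = j ∨ k = j + 1 ∨
    (k ≠ i ∧ k ≠ i + 1 ∧ k ≠ j ∧ k ≠ j + 1) := by omega
  all_goals simp (disch := omega) [MulAut.mul_apply, artin_of_of_ne]

end

theorem artin_braid (i : ℕ) :
    artin i * artin (i + 1) * artin i = artin (i + 1) * artin i * artin (i + 1) := by
  refine FreeGroup.mulAut_ext fun k => ?_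
  obtain rfl | rfl | rfl | hk : k = i ∨ k = i + 1 ∨ k = i + 2 ∨
    (k ≠ i ∧ k ≠ i + 1 ∧ k ≠ i + 2) := by omega
  all_goals simp (disch := omega) [MulAut.mul_apply, artin_of_of_ne] <;> group

theorem lift_artin_eq_one_of_mem_braidRels : ∀ r ∈ braidRels, lift artin r = 1 := by
  rintro r ⟨i, j, ⟨hij, rfl⟩ | ⟨rfl, rfl⟩⟩
  · simp only [_root_.map_mul, _root_.map_inv, FreeGroup.lift_apply_of, artin_mul_comm hij]
    group
  · simp only [_root_.map_mul, _root_.map_inv, FreeGroup.lift_apply_of, artin_braid]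
    group

def artinRep : BInf →* MulAut (FreeGroup ℕ) :=
  PresentedGroup.toGroup lift_artin_eq_one_of_mem_braidRels

theorem artinRep_σ (i : ℕ) : artinRep (σ i) = artin i :=
  PresentedGroup.toGroup.of lift_artin_eq_one_of_mem_braidRels

theorem artin_succ_mem_letterStabilizer (k : ℕ) :
    artin (k + 1) ∈ letterStabilizer 0 := by
  have hfw : ∀ i ≠ 0, artin (k + 1) (of i) ∈ avoiding 0 := by
    intro i hi
    obtain rfl | rfl | ⟨h₁, h₂⟩ : i = k + 1 ∨ i = k + 2 ∨ (i ≠ k + 1 ∧ i ≠ k + 2) := by omega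
    · rw [artin_of_self]
      exact mul_mem (mul_mem (of_mem_avoiding (by omega))
        (of_mem_avoiding (by omega))) (inv_mem (of_mem_avoiding (by omega)))
    · rw [artin_of_succ]
      exact of_mem_avoiding (by omega)
    · rw [artin_of_of_ne h₁ h₂]
      exact of_mem_avoiding hi
  have hbw : ∀ i ≠ 0, (artin (k + 1)).symm (of i) ∈ avoiding 0 := by
    intro i hi
    obtain rfl | rfl | ⟨h₁, h₂⟩ : i = k + 1 ∨ i = k + 2 ∨ (i ≠ k + 1 ∧ i ≠ k + 2) := by omega
    · rw [artin_symm_of_self]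
      exact of_mem_avoiding (by omega)
    · rw [artin_symm_of_succ]
      exact mul_mem (mul_mem (inv_mem (of_mem_avoiding (by omega)))
        (of_mem_avoiding (by omega))) (of_mem_avoiding (by omega))
    · rw [artin_symm_of_of_ne h₁ h₂]
      exact of_mem_avoiding hi
  refine Subgroup.mem_inf.2 ⟨MulAction.mem_stabilizer_iff.2 (artin_of_of_ne (by omega) (by omega)),
    MulAction.mem_stabilizer_set.2 fun g => ⟨fun hg => ?_, fun hg => ?_⟩⟩
  · simpa using map_mem_avoiding (f := (artin (k + 1)).symm.toMonoidHom) hbw hg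
  · exact map_mem_avoiding (f := (artin (k + 1)).toMonoidHom) hfw hg

theorem artinRep_sh_mem_letterStabilizer {sh : BInf →* BInf}
    (hsh : ∀ i : ℕ, sh (σ i) = σ (i + 1)) (c : BInf) :
    artinRep (sh c) ∈ letterStabilizer 0 :=
  PresentedGroup.generated_by braidRels ((letterStabilizer 0).comap (artinRep.comp sh))
    (fun i => show artinRep (sh (σ i)) ∈ _ by
      simpa [hsh, artinRep_σ] using artin_succ_mem_letterStabilizer i) c

theorem FreeGroup.IsConjAlternating.artin_zero {g : FreeGroup ℕ} (hg : IsConjAlternating 0 g) :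
    IsConjAlternating 0 (artin 0 g) := by
  obtain ⟨w, hw, rfl⟩ := hg
  let τ : MulAut (FreeGroup ℕ) := (MulAut.conj (of 0))⁻¹ * artin 0
  have hτ : Alternating 1 (τ w) := by
    refine hw.map (f := τ.toMonoidHom) τ.injective (by simp [τ]; group) fun i hi => ?_
    obtain rfl | hi₁ := eq_or_ne i 1
    · simpa [τ] using of_mem_avoiding zero_ne_one
    · have : τ (of i) = (of 0)⁻¹ * of i * of 0 := by simp [τ, artin_of_of_ne hi hi₁]
      rw [MulEquiv.coe_toMonoidHom, this]
      exact mul_mem (mul_mem (inv_mem (of_mem_avoiding zero_ne_one)) (of_mem_avoiding hi₁))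
        (of_mem_avoiding zero_ne_one)
  refine ⟨of 1 * τ w * (of 1)⁻¹, hτ.conj_of one_ne_zero, ?_⟩
  simp [τ, MulAut.mul_apply]
  group

theorem isConjAlternating_artin_zero_of : IsConjAlternating 0 (artin 0 (of 0)) :=
  ⟨of 1, .syllable (of_mem_avoiding one_ne_zero) (FreeGroup.of_ne_one 1), artin_of_self⟩

def sigmaPositive (sh : BInf →* BInf) : Subsemigroup BInf :=
  Subsemigroup.closure {β | ∃ x y, sh x * σ 0 * sh y = β}

theorem posProd_mem_sigmaPositive (sh : BInf →* BInf) (c : ℕ → BInf) {n : ℕ} (hn : 1 ≤ n) :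
    posProd sh c n ∈ sigmaPositive sh := by
  induction n, hn using Nat.le_induction with
  | base => exact Subsemigroup.subset_closure ⟨c 0, c 1, rfl⟩
  | succ n _ ih =>
    have : posProd sh c (n + 1) = posProd sh c n * (sh 1 * σ 0 * sh (c (n + 1))) := by
      simp [posProd, mul_assoc]
    rw [this]
    exact mul_mem ih (Subsemigroup.subset_closure ⟨1, c (n + 1), rfl⟩)

theorem inv_mul_mul_sh_mem_sigmaPositive (sh : BInf →* BInf) {a b : BInf}
    (h : Relation.TransGen (fun a b : BInf => ∃ x, braidAct sh a x = b) a b) :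
    a⁻¹ * b * sh a ∈ sigmaPositive sh := by
  induction h with
  | single hab =>
    obtain ⟨x, rfl⟩ := hab
    exact Subsemigroup.subset_closure ⟨x, 1, by simp [braidAct]; group⟩
  | @tail b _ _ hbc ih =>
    obtain ⟨y, rfl⟩ := hbc
    have : a⁻¹ * braidAct sh b y * sh a =
        a⁻¹ * b * sh a * (sh (a⁻¹ * y) * σ 0 * sh (b⁻¹ * a)) := by
      simp [braidAct]
      group
    rw [this]
    exact mul_mem ih (Subsemigroup.subset_closure ⟨_, _, rfl⟩)

theorem isConjAlternating_artinRep_of_mem_sigmaPositive {sh : BInf →* BInf}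
    (hsh : ∀ i : ℕ, sh (σ i) = σ (i + 1)) {β : BInf} (hβ : β ∈ sigmaPositive sh) :
    IsConjAlternating 0 (artinRep β (of 0)) ∧
      ∀ g, IsConjAlternating 0 g → IsConjAlternating 0 (artinRep β g) := by
  induction hβ using Subsemigroup.closure_induction with
  | mem β hβ =>
    obtain ⟨x, y, rfl⟩ := hβ
    have hx := artinRep_sh_mem_letterStabilizer hsh x
    have hy := artinRep_sh_mem_letterStabilizer hsh y
    simp only [map_mul, MulAut.mul_apply, artinRep_σ]
    refine ⟨?_, fun g hg => ?_⟩
    · rw [apply_of_of_mem_letterStabilizer hy]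
      exact isConjAlternating_artin_zero_of.map_of_mem_letterStabilizer hx
    · exact (hg.map_of_mem_letterStabilizer hy).artin_zero.map_of_mem_letterStabilizer hx
  | mul β γ _ _ hβ hγ =>
    simp only [map_mul, MulAut.mul_apply]
    exact ⟨hβ.2 _ hγ.1, fun g hg => hβ.2 _ (hγ.2 g hg)⟩

theorem artinRep_apply_of_zero_ne {sh : BInf →* BInf} (hsh : ∀ i : ℕ, sh (σ i) = σ (i + 1))
    {β : BInf} (hβ : β ∈ sigmaPositive sh) :
    artinRep β (of 0) ≠ of 0 :=
  (isConjAlternating_artinRep_of_mem_sigmaPositive hsh hβ).1.ne_of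

/-- a σ₁-positive braid is never trivial: for every `n ≥ 1` and all
braids `c 0, …, c n`, the element `sh (c 0) * σ₁ * sh (c 1) * σ₁ * ⋯ * σ₁ * sh (c n)`
is not `1`. Consequently, the braid shelf `(B∞, ◃)` is acyclic: the transitive
closure of the division relation `a ⊏ b ↔ ∃ x, a ◃ x = b` is irreflexive.
Here `sh` is the shift endomorphism, i.e. `sh (σ i) = σ (i+1)` for all `i`. -/
theorem sigma1_positive_nontrivial_and_braid_shelf_acyclic
    (sh : BInf →* BInf) (hsh : ∀ i : ℕ, sh (σ i) = σ (i + 1)) :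
    (∀ n : ℕ, 1 ≤ n → ∀ c : ℕ → BInf, posProd sh c n ≠ 1) ∧
    Irreflexive (Relation.TransGen (fun a b : BInf => ∃ x, braidAct sh a x = b)) := by
  refine ⟨fun n hn c h => ?_, fun a ha => ?_⟩
  · apply artinRep_apply_of_zero_ne hsh (posProd_mem_sigmaPositive sh c hn)
    rw [h, map_one, MulAut.one_apply]
  · have hsha := inv_mul_mul_sh_mem_sigmaPositive sh ha
    rw [inv_mul_cancel, one_mul] at hsha
    exact artinRep_apply_of_zero_ne hsh hsha
      (apply_of_of_mem_letterStabilizer (artinRep_sh_mem_letterStabilizer hsh a))
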